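/- Let μ_R be a probability measure on [0,R] with density bounded below by c₁(R-r)^{κ-1} on [r₀,R] for some r₀ < R, c₁ > 0 and integer κ ≥ 1. Then there exists c > 0 such that for all sufficiently large t, ∫₀^R r^{2t} dμ_R(r) ≥ c R^{2t} (2t+1)^{-κ}. -/

import Mathlib

/-!
Put `δ = R / (8 (t + 1))`. On the window `[R - 2δ, R - δ]` the density is at least `c₁ δ^{κ-1}`,
so the window has `μ_R`-mass at least `c₁ δ^κ`, while by Bernoulli's inequality
`r^{2t} ≥ R^{2t} (1 - 1/(4(t+1)))^{2t} ≥ R^{2t}/2` there. Hence the moment is at least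
`c₁ R^{2t} δ^κ / 2`, which is of order `R^{2t} (2t+1)^{-κ}`. The window lies in `[r₀, R]` as soon
as `t ≥ R / (R - r₀)`.
-/

open MeasureTheory

theorem le_measure_Icc_of_withDensity_le {μ : Measure ℝ} {R r₀ c₁ δ : ℝ} {k : ℕ}
    (hc₁ : 0 ≤ c₁) (hδ : 0 ≤ δ) (h2δ : 2 * δ ≤ R - r₀)
    (hlb : (volume.restrict (Set.Icc r₀ R)).withDensity
        (fun r => ENNReal.ofReal (c₁ * (R - r) ^ k)) ≤ μ) :
    ENNReal.ofReal (c₁ * δ ^ (k + 1)) ≤ μ (Set.Icc (R - 2 * δ) (R - δ)) := by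
  have hsub : Set.Icc (R - 2 * δ) (R - δ) ⊆ Set.Icc r₀ R :=
    Set.Icc_subset_Icc (by linarith) (by linarith)
  calc ENNReal.ofReal (c₁ * δ ^ (k + 1))
      = ∫⁻ _ in Set.Icc (R - 2 * δ) (R - δ), ENNReal.ofReal (c₁ * δ ^ k) := by
        rw [setLIntegral_const, Real.volume_Icc, ← ENNReal.ofReal_mul (by positivity), pow_succ,
          ← mul_assoc]
        ring_nf
    _ ≤ ∫⁻ r in Set.Icc (R - 2 * δ) (R - δ), ENNReal.ofReal (c₁ * (R - r) ^ k) := by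
        refine setLIntegral_mono (by fun_prop) fun r hr => ?_
        have : δ ≤ R - r := by linarith [hr.2]
        gcongr
    _ = (volume.restrict (Set.Icc r₀ R)).withDensity
          (fun r => ENNReal.ofReal (c₁ * (R - r) ^ k)) (Set.Icc (R - 2 * δ) (R - δ)) := by
        rw [withDensity_apply _ measurableSet_Icc, Measure.restrict_restrict measurableSet_Icc,
          Set.inter_eq_left.mpr hsub]
    _ ≤ μ (Set.Icc (R - 2 * δ) (R - δ)) := hlb _

theorem pow_mul_measureReal_Icc_le_integral {μ : Measure ℝ} [IsFiniteMeasure μ] {R a b : ℝ}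
    (hsupp : μ (Set.Icc 0 R)ᶜ = 0) (ha : 0 ≤ a) (n : ℕ) :
    a ^ n * μ.real (Set.Icc a b) ≤ ∫ r, r ^ n ∂μ := by
  have hmem : ∀ᵐ r ∂μ, r ∈ Set.Icc 0 R := ae_iff.mpr hsupp
  have hint : Integrable (fun r : ℝ => r ^ n) μ := by
    refine .of_bound (by fun_prop) (R ^ n) ?_
    filter_upwards [hmem] with r hr
    rw [Real.norm_eq_abs, abs_pow, abs_of_nonneg hr.1]
    exact pow_le_pow_left₀ hr.1 hr.2 n
  calc a ^ n * μ.real (Set.Icc a b)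
      ≤ ∫ r in Set.Icc a b, r ^ n ∂μ :=
        setIntegral_ge_of_const_le_real measurableSet_Icc (measure_ne_top _ _)
          (fun r hr => pow_le_pow_left₀ ha hr.1 n) hint.integrableOn
    _ ≤ ∫ r, r ^ n ∂μ :=
        setIntegral_le_integral hint (by filter_upwards [hmem] with r hr using pow_nonneg hr.1 n)

theorem pow_div_two_le_sub_div_pow {R : ℝ} (hR : 0 ≤ R) (t : ℕ) :
    R ^ (2 * t) / 2 ≤ (R - R / (4 * (t + 1))) ^ (2 * t) := by
  have ht : (0 : ℝ) < 4 * (t + 1) := by positivity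
  have hx : 1 / (4 * ((t : ℝ) + 1)) ≤ 1 := by rw [div_le_one ht]; linarith
  have hbern := one_add_mul_le_pow (a := -(1 / (4 * ((t : ℝ) + 1)))) (by linarith) (2 * t)
  have hhalf : (1 : ℝ) / 2 ≤ 1 + ((2 * t : ℕ) : ℝ) * -(1 / (4 * (t + 1))) := by
    have : 2 * (t : ℝ) / (4 * (t + 1)) ≤ 1 / 2 := by rw [div_le_iff₀ ht]; linarith
    push_cast
    rw [mul_neg, mul_one_div]
    linarith
  calc R ^ (2 * t) / 2 = R ^ (2 * t) * (1 / 2) := by ring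
    _ ≤ R ^ (2 * t) * (1 + -(1 / (4 * (t + 1)))) ^ (2 * t) := by gcongr; linarith
    _ = (R - R / (4 * (t + 1))) ^ (2 * t) := by rw [← mul_pow]; congr 1; field_simp; ring

theorem stmt16_general (R r₀ : ℝ) (hR : 0 < R) (hr₀R : r₀ < R)
    (c₁ : ℝ) (hc₁ : 0 < c₁) (κ : ℕ) (hκ : 1 ≤ κ)
    (μR : Measure ℝ) [IsProbabilityMeasure μR]
    (hsuppR : μR (Set.Icc 0 R)ᶜ = 0)
    (hlb : (volume.restrict (Set.Icc r₀ R)).withDensity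
        (fun r => ENNReal.ofReal (c₁ * (R - r) ^ (κ - 1))) ≤ μR) :
    ∃ c > 0, ∃ T : ℕ, ∀ t ≥ T,
      c * R ^ (2 * t) / (2 * (t : ℝ) + 1) ^ κ ≤ ∫ r, r ^ (2 * t) ∂μR := by
  obtain ⟨T, hT⟩ := exists_nat_ge (R / (R - r₀))
  refine ⟨c₁ * R ^ κ / (2 * 8 ^ κ), by positivity, T, fun t ht => ?_⟩
  set δ := R / (8 * ((t : ℝ) + 1)) with hδ_def
  have h2δ : 2 * δ = R / (4 * (t + 1)) := by rw [hδ_def]; field_simp; ring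
  have hwindow : 2 * δ ≤ R - r₀ := by
    have hRt : R ≤ t * (R - r₀) :=
      (div_le_iff₀ (sub_pos.mpr hr₀R)).mp (hT.trans (Nat.cast_le.mpr ht))
    rw [h2δ, div_le_iff₀ (by positivity)]
    nlinarith
  have hleft : 0 ≤ R - 2 * δ := by
    rw [sub_nonneg, h2δ]
    exact div_le_self hR.le (by linarith)
  have hmass : c₁ * δ ^ κ ≤ μR.real (Set.Icc (R - 2 * δ) (R - δ)) := by
    have := le_measure_Icc_of_withDensity_le hc₁.le (by positivity) hwindow hlb
    rwa [Nat.sub_add_cancel hκ, ENNReal.ofReal_le_iff_le_toReal (measure_ne_top _ _)] at this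
  have hpow : R ^ (2 * t) / 2 ≤ (R - 2 * δ) ^ (2 * t) := h2δ ▸ pow_div_two_le_sub_div_pow hR.le t
  calc c₁ * R ^ κ / (2 * 8 ^ κ) * R ^ (2 * t) / (2 * (t : ℝ) + 1) ^ κ
      = R ^ (2 * t) / 2 * (c₁ * (R / (8 * (2 * t + 1))) ^ κ) := by rw [div_pow, mul_pow]; ring
    _ ≤ R ^ (2 * t) / 2 * (c₁ * δ ^ κ) := by rw [hδ_def]; gcongr; linarith
    _ ≤ (R - 2 * δ) ^ (2 * t) * μR.real (Set.Icc (R - 2 * δ) (R - δ)) :=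
        mul_le_mul hpow hmass (by positivity) (pow_nonneg hleft _)
    _ ≤ ∫ r, r ^ (2 * t) ∂μR := pow_mul_measureReal_Icc_le_integral hsuppR hleft _

/-- If `μ_R` is a probability measure on `[0,R]` whose density is bounded below by
`c₁ (R-r)^{κ-1}` on `[r₀,R]`, then there exists `c > 0` such that for all large `t`,
`∫₀^R r^{2t} dμ_R ≥ c R^{2t} (2t+1)^{-κ}`. -/
theorem stmt16 (R r₀ : ℝ) (hR : 0 < R) (hr₀ : 0 ≤ r₀) (hr₀R : r₀ < R)
    (c₁ : ℝ) (hc₁ : 0 < c₁) (κ : ℕ) (hκ : 1 ≤ κ)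
    (μR : Measure ℝ) [IsProbabilityMeasure μR]
    (hsuppR : μR (Set.Icc 0 R)ᶜ = 0)
    (hlb : (volume.restrict (Set.Icc r₀ R)).withDensity
        (fun r => ENNReal.ofReal (c₁ * (R - r) ^ (κ - 1))) ≤ μR) :
    ∃ c > 0, ∃ T : ℕ, ∀ t ≥ T,
      c * R ^ (2 * t) / (2 * (t : ℝ) + 1) ^ κ ≤ ∫ r, r ^ (2 * t) ∂μR :=
  stmt16_general R r₀ hR hr₀R c₁ hc₁ κ hκ μR hsuppR hlb
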